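/- Let G have a unique maximum open packing U, and let x ∈ U have a neighbor y ∈ U. Let G' be obtained from G by appending a path P₄ to x (i.e., adding a new path a-b-c-d and the edge xa). Then G' has a unique maximum open packing, namely U ∪ {c, d}, and ρ°(G') = ρ°(G) + 2. -/
import Mathlib


variable {V : Type*}

/-- A set of vertices is an open packing if the open neighborhoods of distinct
vertices in it are pairwise disjoint. -/
def IsOpenPacking (G : SimpleGraph V) (S : Set V) : Prop :=
  S.Pairwise fun u v => Disjoint (G.neighborSet u) (G.neighborSet v)

/-- The open packing number: the maximum cardinality of an open packing. -/
noncomputable def openPackingNumber (G : SimpleGraph V) : ℕ :=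
  sSup {n | ∃ S : Finset V, IsOpenPacking G ↑S ∧ S.card = n}

/-- `U` is the unique maximum open packing of `G`. -/
def HasUniqueMaxOpenPacking (G : SimpleGraph V) (U : Finset V) : Prop :=
  IsOpenPacking G ↑U ∧ U.card = openPackingNumber G ∧
    ∀ S : Finset V, IsOpenPacking G ↑S → S.card = openPackingNumber G → S = U

/-- The graph obtained from `G` by appending a path on `n` new vertices to the
vertex `x` (`x` is joined to the first vertex of a new path `0-1-⋯-(n-1)`). -/
def appendPath (G : SimpleGraph V) (x : V) (n : ℕ) : SimpleGraph (V ⊕ Fin n) :=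
  SimpleGraph.fromRel fun a b => match a, b with
    | Sum.inl u, Sum.inl v => G.Adj u v
    | Sum.inl u, Sum.inr i => u = x ∧ (i : ℕ) = 0
    | Sum.inr i, Sum.inr j => (j : ℕ) = (i : ℕ) + 1
    | _, _ => False

lemma ap_inl_inl (G : SimpleGraph V) (x : V) {n} (u v : V) :
    (appendPath G x n).Adj (Sum.inl u) (Sum.inl v) ↔ G.Adj u v := by
  simp only [appendPath, SimpleGraph.fromRel_adj]
  constructor
  · rintro ⟨h, h2 | h2⟩
    · exact h2
    · exact h2.symm
  · exact fun h => ⟨by simp [h.ne], Or.inl h⟩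

lemma ap_inl_inr (G : SimpleGraph V) (x : V) {n} (u : V) (i : Fin n) :
    (appendPath G x n).Adj (Sum.inl u) (Sum.inr i) ↔ u = x ∧ (i : ℕ) = 0 := by
  simp [appendPath, SimpleGraph.fromRel_adj]

lemma ap_inr_inr (G : SimpleGraph V) (x : V) {n} (i j : Fin n) :
    (appendPath G x n).Adj (Sum.inr i) (Sum.inr j) ↔
      ((j : ℕ) = (i : ℕ) + 1 ∨ (i : ℕ) = (j : ℕ) + 1) := by
  simp only [appendPath, SimpleGraph.fromRel_adj]
  constructor
  · rintro ⟨h, h2⟩; exact h2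
  · intro h
    refine ⟨?_, h⟩
    intro heq
    have hij : i = j := Sum.inr_injective heq
    subst hij
    omega

lemma ap_inr_inl (G : SimpleGraph V) (x : V) {n} (u : V) (i : Fin n) :
    (appendPath G x n).Adj (Sum.inr i) (Sum.inl u) ↔ u = x ∧ (i : ℕ) = 0 := by
  rw [SimpleGraph.adj_comm, ap_inl_inr]

lemma fin4v0 : ((0 : Fin 4) : ℕ) = 0 := rfl
lemma fin4v1 : ((1 : Fin 4) : ℕ) = 1 := rfl
lemma fin4v2 : ((2 : Fin 4) : ℕ) = 2 := rfl
lemma fin4v3 : ((3 : Fin 4) : ℕ) = 3 := rfl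

lemma isOpenPacking_iff {G : SimpleGraph V} {S : Set V} :
    IsOpenPacking G S ↔
      ∀ u ∈ S, ∀ v ∈ S, u ≠ v → ∀ w, G.Adj u w → G.Adj v w → False := by
  constructor
  · intro h u hu v hv huv w hw1 hw2
    exact Set.disjoint_left.1 (h hu hv huv) hw1 hw2
  · intro h u hu v hv huv
    exact Set.disjoint_left.2 fun w hw1 hw2 => h u hu v hv huv w hw1 hw2

lemma card_le_opn [Fintype V] {G : SimpleGraph V} {S : Finset V}
    (h : IsOpenPacking G ↑S) : S.card ≤ openPackingNumber G := by
  apply le_csSup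
  · refine ⟨Fintype.card V, ?_⟩
    rintro n ⟨T, -, rfl⟩
    exact T.card_le_univ.trans (le_of_eq Finset.card_univ)
  · exact ⟨S, h, rfl⟩

lemma opn_le [Fintype V] {G : SimpleGraph V} {m : ℕ}
    (h : ∀ S : Finset V, IsOpenPacking G ↑S → S.card ≤ m) :
    openPackingNumber G ≤ m := by
  apply csSup_le
  · exact ⟨0, ∅, by simp [IsOpenPacking], rfl⟩
  · rintro n ⟨T, hT, rfl⟩
    exact h T hT

lemma fin4_card_le (B : Finset (Fin 4)) (h02 : ¬((0 : Fin 4) ∈ B ∧ (2 : Fin 4) ∈ B))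
    (h13 : ¬((1 : Fin 4) ∈ B ∧ (3 : Fin 4) ∈ B)) : B.card ≤ 2 := by
  revert h02 h13; revert B; decide

theorem stmt_4 [Fintype V] [DecidableEq V] (G : SimpleGraph V)
    (U : Finset V) (hU : HasUniqueMaxOpenPacking G U)
    (x y : V) (hx : x ∈ U) (hy : y ∈ U) (hxy : G.Adj x y) :
    HasUniqueMaxOpenPacking (appendPath G x 4)
      (U.image Sum.inl ∪ {Sum.inr 2, Sum.inr 3}) ∧
    openPackingNumber (appendPath G x 4) = openPackingNumber G + 2 := by
  obtain ⟨hUp, hUc, hUuniq⟩ := hU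
  set G' := appendPath G x 4 with hG'
  set U' : Finset (V ⊕ Fin 4) := U.image Sum.inl ∪ {Sum.inr 2, Sum.inr 3} with hU'
  have hUpack := isOpenPacking_iff.1 hUp
  -- U' is an open packing
  have hU'pack : IsOpenPacking G' ↑U' := by
    rw [isOpenPacking_iff]
    intro u hu v hv huv w hw1 hw2
    simp only [hU', Finset.coe_union, Finset.coe_image, Finset.coe_insert,
      Finset.coe_singleton, Set.mem_union, Set.mem_image, Set.mem_insert_iff,
      Set.mem_singleton_iff] at hu hv
    -- helper to discharge each unordered case
    have main : ∀ a b : V ⊕ Fin 4,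
        ((∃ t ∈ U, Sum.inl t = a) ∨ a = Sum.inr 2 ∨ a = Sum.inr 3) →
        ((∃ t ∈ U, Sum.inl t = b) ∨ b = Sum.inr 2 ∨ b = Sum.inr 3) →
        a ≠ b → ∀ w, G'.Adj a w → G'.Adj b w → False := by
      rintro a b ha hb hab w hw1 hw2
      rcases ha with ⟨s, hs, rfl⟩ | rfl | rfl <;>
        rcases hb with ⟨t, ht, rfl⟩ | rfl | rfl <;>
          rcases w with w | i <;>
            simp only [hG', ap_inl_inl, ap_inl_inr, ap_inr_inl, ap_inr_inr,
              fin4v0, fin4v1, fin4v2, fin4v3] at hw1 hw2 <;>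
              first
                | (exact hUpack s hs t ht (fun h => hab (by rw [h])) w hw1 hw2)
                | (exact hab (by rw [hw1.1, hw2.1]))
                | (obtain ⟨rfl, h0⟩ := hw1; omega)
                | (obtain ⟨rfl, h0⟩ := hw2; omega)
                | omega
                | (exact hab rfl)
    exact main u v hu hv huv w hw1 hw2
  have hU'card : U'.card = U.card + 2 := by
    rw [hU', Finset.card_union_of_disjoint, Finset.card_image_of_injective _ Sum.inl_injective]
    · rfl
    · simp [Finset.disjoint_left]
  -- key lemma: any packing of G' has card ≤ U.card + 2, with equality only for U'
  have key : ∀ S' : Finset (V ⊕ Fin 4), IsOpenPacking G' ↑S' →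
      S'.card ≤ U.card + 2 ∧ (S'.card = U.card + 2 → S' = U') := by
    intro S' hS'
    have hSp := isOpenPacking_iff.1 hS'
    set A : Finset V := S'.toLeft with hA
    set B : Finset (Fin 4) := S'.toRight with hB
    have hcard : A.card + B.card = S'.card := Finset.card_toLeft_add_card_toRight
    have hmemA : ∀ u : V, u ∈ A ↔ Sum.inl u ∈ S' := fun u => Finset.mem_toLeft
    have hmemB : ∀ i : Fin 4, i ∈ B ↔ Sum.inr i ∈ S' := fun i => Finset.mem_toRight
    have hApack : IsOpenPacking G ↑A := by
      rw [isOpenPacking_iff]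
      intro u hu v hv huv w hw1 hw2
      exact hSp (Sum.inl u) ((hmemA u).1 hu) (Sum.inl v) ((hmemA v).1 hv)
        (by simp [huv]) (Sum.inl w) ((ap_inl_inl G x u w).2 hw1)
        ((ap_inl_inl G x v w).2 hw2)
    have hAle : A.card ≤ U.card := by rw [hUc]; exact card_le_opn hApack
    have hAeq : A.card = U.card → A = U := fun h => hUuniq A hApack (by rw [← hUc, h])
    have h02 : ¬((0 : Fin 4) ∈ B ∧ (2 : Fin 4) ∈ B) := by
      rintro ⟨h0, h2⟩
      exact hSp (Sum.inr 0) ((hmemB 0).1 h0) (Sum.inr 2) ((hmemB 2).1 h2)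
        (by simp) (Sum.inr 1) (by rw [ap_inr_inr]; omega) (by rw [ap_inr_inr]; omega)
    have h13 : ¬((1 : Fin 4) ∈ B ∧ (3 : Fin 4) ∈ B) := by
      rintro ⟨h1, h3⟩
      exact hSp (Sum.inr 1) ((hmemB 1).1 h1) (Sum.inr 3) ((hmemB 3).1 h3)
        (by simp) (Sum.inr 2) (by rw [ap_inr_inr]; omega) (by rw [ap_inr_inr]; omega)
    have hBle : B.card ≤ 2 := fin4_card_le B h02 h13
    by_cases h01 : (0 : Fin 4) ∈ B ∨ (1 : Fin 4) ∈ B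
    · -- then A ≠ U, so A.card < U.card
      have hAne : A ≠ U := by
        rintro rfl
        rcases h01 with h0 | h1
        · exact hSp (Sum.inr 0) ((hmemB 0).1 h0) (Sum.inl y) ((hmemA y).1 hy)
            (by simp) (Sum.inl x)
            (G'.adj_symm ((ap_inl_inr G x x 0).2 ⟨rfl, rfl⟩))
            ((ap_inl_inl G x y x).2 hxy.symm)
        · exact hSp (Sum.inr 1) ((hmemB 1).1 h1) (Sum.inl x) ((hmemA x).1 hx)
            (by simp) (Sum.inr 0)
            (by rw [hG', ap_inr_inr]; omega)
            ((ap_inl_inr G x x 0).2 ⟨rfl, rfl⟩)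
      have hAlt : A.card < U.card := lt_of_le_of_ne hAle (fun h => hAne (hAeq h))
      constructor
      · omega
      · intro h; omega
    · push_neg at h01
      have hBsub : B ⊆ {2, 3} := by
        intro i hi
        fin_cases i
        · exact absurd hi h01.1
        · exact absurd hi h01.2
        · simp
        · simp
      constructor
      · omega
      · intro hcardeq
        have hB2 : B.card = 2 := by
          have h1 := Finset.card_le_card hBsub
          have h2 : ({2, 3} : Finset (Fin 4)).card = 2 := by decide
          omega
        have hAc : A.card = U.card := by omega
        have hAU : A = U := hAeq hAc
        have hBeq : B = {2, 3} := Finset.eq_of_subset_of_card_le hBsub (by rw [hB2]; decide)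
        ext a
        rcases a with u | i
        · simp only [hU', Finset.mem_union, Finset.mem_image, Finset.mem_insert,
            Finset.mem_singleton]
          rw [← hmemA u, hAU]
          constructor
          · intro h; exact Or.inl ⟨u, h, rfl⟩
          · rintro (⟨t, ht, hte⟩ | h | h)
            · cases Sum.inl_injective hte; exact ht
            · exact absurd h (by simp)
            · exact absurd h (by simp)
        · simp only [hU', Finset.mem_union, Finset.mem_image, Finset.mem_insert,
            Finset.mem_singleton]
          rw [← hmemB i, hBeq]
          constructor
          · intro h
            simp only [Finset.mem_insert, Finset.mem_singleton] at h
            rcases h with rfl | rfl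
            · exact Or.inr (Or.inl rfl)
            · exact Or.inr (Or.inr rfl)
          · rintro (⟨t, ht, hte⟩ | h | h)
            · exact absurd hte (by simp)
            · cases Sum.inr_injective h; decide
            · cases Sum.inr_injective h; decide
  have hopn : openPackingNumber G' = U.card + 2 := by
    apply le_antisymm
    · exact opn_le fun S' hS' => (key S' hS').1
    · rw [← hU'card]; exact card_le_opn hU'pack
  refine ⟨⟨hU'pack, by rw [hopn, hU'card], ?_⟩, by rw [hopn, hUc]⟩
  intro S' hS' hScard
  exact (key S' hS').2 (by rw [hScard, hopn])
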